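/- arXiv:1305.1726 — 2 statements merged into one kernel-verified Lean document; each statement's English description precedes it below -/
import Mathlib

section
/- Let f = x₀²y₀ − (x₀+x₁)²y₁ + x₁²y₂ in the polynomial ring k[x₀,x₁,y₀,y₁,y₂] over a field k of characteristic 0, and let f_t = (1/3)(x₀+t·y₀)³ − (1/3)((x₀+x₁)+t·y₁)³ − (1/12)(2x₁−t·y₂)³ − (1/9)(x₀−x₁)³ + (1/9)(x₀+2x₁)³. Then f equals the limit as t → 0 of (1/t)·f_t; equivalently, (1/t)·f_t = f + t·g_t for some polynomial family g_t polynomial in t, i.e., f_t = t·f + t²·h(t) as polynomials in t. -/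
open MvPolynomial

/-! The coefficient of `t⁰` in `f_t` is the cubic form
`(x₀³ - (x₀+x₁)³ - 2x₁³)/3 + ((x₀+2x₁)³ - (x₀-x₁)³)/9`, which vanishes identically; the coefficient
of `t¹` is `f`, read off from the linear terms of the binomial expansions. -/

theorem cubic_deformation_eq {A : Type*} [CommRing A] {a₃ a₉ a₁₂ : A}
    (h₃ : a₃ * 3 = 1) (h₉ : a₉ * 9 = 1) (h₁₂ : a₁₂ * 12 = 1) (t x₀ x₁ y₀ y₁ y₂ : A) :
    a₃ * (x₀ + t * y₀) ^ 3 - a₃ * ((x₀ + x₁) + t * y₁) ^ 3 - a₁₂ * (2 * x₁ - t * y₂) ^ 3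
        - a₉ * (x₀ - x₁) ^ 3 + a₉ * (x₀ + 2 * x₁) ^ 3 =
      t * (x₀ ^ 2 * y₀ - (x₀ + x₁) ^ 2 * y₁ + x₁ ^ 2 * y₂)
        + t ^ 2 * (x₀ * y₀ ^ 2 - (x₀ + x₁) * y₁ ^ 2 - 6 * a₁₂ * x₁ * y₂ ^ 2
          + t * (a₃ * y₀ ^ 3 - a₃ * y₁ ^ 3 + a₁₂ * y₂ ^ 3)) := by
  linear_combination
    (t * (x₀ ^ 2 * y₀ - (x₀ + x₁) ^ 2 * y₁) + t ^ 2 * (x₀ * y₀ ^ 2 - (x₀ + x₁) * y₁ ^ 2)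
      - (x₀ ^ 2 * x₁ + x₀ * x₁ ^ 2) - 4 * a₁₂ * x₁ ^ 3) * h₃
    + (x₀ ^ 2 * x₁ + x₀ * x₁ ^ 2 + x₁ ^ 3) * h₉ + (t * x₁ ^ 2 * y₂ - x₁ ^ 3 + a₃ * x₁ ^ 3) * h₁₂

theorem RingHom.map_one_div_mul_ofNat {k A : Type*} [Field k] [CharZero k] [Semiring A]
    (φ : k →+* A) (n : ℕ) [n.AtLeastTwo] :
    φ (1 / OfNat.ofNat n) * OfNat.ofNat n = 1 := by
  rw [← map_ofNat φ n, ← map_mul, one_div_mul_cancel (NeZero.ne _), map_one]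

/-- In `k[t][x₀,x₁,y₀,y₁,y₂]` (realized as multivariate polynomials
over `Polynomial k`), the polynomial
`f_t = (1/3)(x₀+t·y₀)³ − (1/3)((x₀+x₁)+t·y₁)³ − (1/12)(2x₁−t·y₂)³ − (1/9)(x₀−x₁)³ + (1/9)(x₀+2x₁)³`
satisfies `f_t = t·f + t²·h` for some `h`, where
`f = x₀²y₀ − (x₀+x₁)²y₁ + x₁²y₂`; i.e. `f = lim_{t→0} (1/t) f_t`. -/
theorem stmt0 (k : Type*) [Field k] [CharZero k] :
    let R := MvPolynomial (Fin 5) (Polynomial k)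
    let t : R := C Polynomial.X
    let c : k → R := fun a => C (Polynomial.C a)
    let x0 : R := X 0
    let x1 : R := X 1
    let y0 : R := X 2
    let y1 : R := X 3
    let y2 : R := X 4
    let f : R := x0 ^ 2 * y0 - (x0 + x1) ^ 2 * y1 + x1 ^ 2 * y2
    let ft : R := c (1 / 3) * (x0 + t * y0) ^ 3 - c (1 / 3) * ((x0 + x1) + t * y1) ^ 3
      - c (1 / 12) * (2 * x1 - t * y2) ^ 3 - c (1 / 9) * (x0 - x1) ^ 3
      + c (1 / 9) * (x0 + 2 * x1) ^ 3
    ∃ h : R, ft = t * f + t ^ 2 * h := by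
  intro R t c x0 x1 y0 y1 y2 f ft
  have hc (n : ℕ) [n.AtLeastTwo] : c (1 / OfNat.ofNat n) * OfNat.ofNat n = 1 :=
    RingHom.map_one_div_mul_ofNat ((C : Polynomial k →+* R).comp Polynomial.C) n
  exact ⟨_, cubic_deformation_eq (hc 3) (hc 9) (hc 12) t x0 x1 y0 y1 y2⟩
end

section
/- Let f = x₀²y₀ − (x₀+x₁)²y₁ + x₁²y₂ ∈ S³V, V = k⁵. The degree-2 part of Ann(f) is spanned by all products βᵢβⱼ (0 ≤ i ≤ j ≤ 2) together with φ₁ = α₁β₀, φ₂ = α₀β₂, φ₃ = −α₀β₁ + α₁β₁, φ₄ = α₀β₀ + α₀β₁ + α₁β₂; in particular dim Ann(f)₂ = 10. -/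
open MvPolynomial

noncomputable section

/-- The differential operator with constant coefficients corresponding to a monomial
exponent `m` (composition of partial derivatives). -/
def monOp (k : Type*) [CommSemiring k] {n : ℕ} (m : Fin n →₀ ℕ) :
    Module.End k (MvPolynomial (Fin n) k) :=
  (List.ofFn fun i : Fin n =>
    ((pderiv i).toLinearMap : Module.End k (MvPolynomial (Fin n) k)) ^ m i).prod

/-- Apolarity contraction: the linear map `θ ↦ θ ⌟ f`, where a dual polynomial `θ`
acts on `f` as a differential operator with constant coefficients. -/
def contractMap {k : Type*} [CommSemiring k] {n : ℕ} (f : MvPolynomial (Fin n) k) :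
    MvPolynomial (Fin n) k →ₗ[k] MvPolynomial (Fin n) k :=
  Finsupp.lsum k (fun m => LinearMap.toSpanSingleton k _ ((monOp k m) f))
    ∘ₗ (AddMonoidAlgebra.coeffLinearEquiv k).toLinearMap

/-- The irrelevant maximal ideal `(X 0, …, X (n-1))`. -/
def irrel (k : Type*) [CommSemiring k] (n : ℕ) : Ideal (MvPolynomial (Fin n) k) :=
  Ideal.span (Set.range X)

/-- Saturation of an ideal with respect to the irrelevant maximal ideal. -/
def satur {k : Type*} [CommRing k] {n : ℕ} (I : Ideal (MvPolynomial (Fin n) k)) :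
    Ideal (MvPolynomial (Fin n) k) :=
  ⨆ m : ℕ, Submodule.colon I ((irrel k n ^ m : Ideal (MvPolynomial (Fin n) k)) : Submodule _ _)

/-- An ideal is saturated (with respect to the irrelevant maximal ideal). -/
def IsSat {k : Type*} [CommRing k] {n : ℕ} (I : Ideal (MvPolynomial (Fin n) k)) : Prop :=
  Submodule.colon I ((irrel k n : Ideal _) : Submodule _ _) ≤ I

/-- An ideal is homogeneous. -/
def IsHomogIdeal {k : Type*} [CommSemiring k] {n : ℕ}
    (I : Ideal (MvPolynomial (Fin n) k)) : Prop :=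
  ∀ g ∈ I, ∀ j : ℕ, homogeneousComponent j g ∈ I

/-- Hilbert function of `S/I` in degree `i`. -/
def HFq (k : Type*) [Field k] {n : ℕ} (I : Ideal (MvPolynomial (Fin n) k)) (i : ℕ) : ℕ :=
  Module.finrank k (homogeneousSubmodule (Fin n) k i) -
    Module.finrank k (Submodule.restrictScalars k I ⊓ homogeneousSubmodule (Fin n) k i :
      Submodule k (MvPolynomial (Fin n) k))

/-- Hilbert function of the apolar algebra `Sym V⋆ / Ann(f)` in degree `i`. -/
def HFapolar {k : Type*} [Field k] {n : ℕ} (f : MvPolynomial (Fin n) k) (i : ℕ) : ℕ :=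
  Module.finrank k (homogeneousSubmodule (Fin n) k i) -
    Module.finrank k (LinearMap.ker (contractMap f) ⊓ homogeneousSubmodule (Fin n) k i :
      Submodule k (MvPolynomial (Fin n) k))

/-- Zariski closure of a subset of a `k`-vector space: common zeros of all polynomial
functions (elements of the subalgebra of functions generated by linear functionals)
vanishing on the subset. -/
def zcl (k : Type*) {M : Type*} [Field k] [AddCommGroup M] [Module k M] (A : Set M) : Set M :=
  {p | ∀ F : M → k,
    F ∈ Algebra.adjoin k (Set.range fun φ : Module.Dual k M => (φ : M → k)) →
    (∀ a ∈ A, F a = 0) → F p = 0}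

end

/-!
Partial derivatives commute, so contracting `f` with `X i * X j` gives `∂ᵢ∂ⱼ f`, and every
quadric is a combination of the `X i * X j`. Contracting `f` with a quadric `∑ cᵢⱼ XᵢXⱼ`
therefore gives a linear form whose five coefficients are explicit linear combinations of the
`cᵢⱼ`. Solving the five resulting equations leaves exactly the span of the ten listed quadrics,
which are linearly independent.
-/

theorem pderiv_pderiv_comm {R σ : Type*} [CommRing R] (i j : σ) (p : MvPolynomial σ R) :
    pderiv i (pderiv j p) = pderiv j (pderiv i p) := by
  classical
  -- the commutator of two derivations is a derivation, and this one kills every variable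
  have hbracket : ⁅pderiv i, pderiv j⁆ = (0 : Derivation R (MvPolynomial σ R) _) :=
    derivation_ext fun l => by
      rw [Derivation.commutator_apply]; simp [pderiv_X, Pi.single_apply, apply_ite]
  rw [← sub_eq_zero, ← Derivation.commutator_apply, hbracket, Derivation.zero_apply]

section Contraction

variable {k : Type*} [CommRing k] {n : ℕ}

theorem pairwise_commute_pderiv_pow (m m' : Fin n → ℕ) (s : Set (Fin n)) :
    s.Pairwise fun i j => Commute
      (((pderiv i).toLinearMap : Module.End k (MvPolynomial (Fin n) k)) ^ m i)
      ((pderiv j).toLinearMap ^ m' j) :=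
  fun i _ j _ _ => Commute.pow_pow (LinearMap.ext fun p => pderiv_pderiv_comm i j p) _ _

theorem monOp_eq_noncommProd (m : Fin n →₀ ℕ) :
    monOp k m = Finset.univ.noncommProd (fun i => (pderiv i).toLinearMap ^ m i)
      (pairwise_commute_pderiv_pow m m _) := by
  simp [monOp, Finset.noncommProd]

theorem monOp_add (m m' : Fin n →₀ ℕ) : monOp k (m + m') = monOp k m * monOp k m' := by
  simp only [monOp_eq_noncommProd, Finsupp.add_apply, pow_add]
  exact Finset.noncommProd_mul_distrib _ _ (pairwise_commute_pderiv_pow m m _)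
    (pairwise_commute_pderiv_pow m' m' _) (pairwise_commute_pderiv_pow m' m _)

theorem monOp_single (i : Fin n) (e : ℕ) :
    monOp k (Finsupp.single i e) = (pderiv i).toLinearMap ^ e := by
  rw [monOp_eq_noncommProd, ← Finset.mul_noncommProd_erase _ (Finset.mem_univ i),
    Finsupp.single_eq_same]
  conv_rhs => rw [← mul_one ((pderiv i).toLinearMap ^ e)]
  congr 1
  refine (Finset.noncommProd_eq_pow_card _ _ _ 1 fun l hl => ?_).trans (one_pow _)
  rw [Finsupp.single_eq_of_ne (Finset.ne_of_mem_erase hl), pow_zero]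

theorem contractMap_monomial (f : MvPolynomial (Fin n) k) (m : Fin n →₀ ℕ) (c : k) :
    contractMap f (monomial m c) = c • monOp k m f := by
  simp [contractMap]

theorem contractMap_X_mul_X (f : MvPolynomial (Fin n) k) (i j : Fin n) :
    contractMap f (X i * X j) = pderiv i (pderiv j f) := by
  rw [X, X, monomial_mul, contractMap_monomial, one_mul, one_smul, monOp_add, monOp_single,
    monOp_single, pow_one, pow_one]
  rfl

end Contraction

open Pointwise in
theorem homogeneousSubmodule_two_eq_span_X_mul_X (σ R : Type*) [CommSemiring R] :
    homogeneousSubmodule σ R 2 =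
      Submodule.span R (Set.range fun ij : σ × σ => X ij.1 * X ij.2) := by
  rw [← homogeneousSubmodule_one_pow, pow_two, homogeneousSubmodule_one_eq_span_X,
    Submodule.span_mul_span, ← Set.image2_mul, ← Set.image_uncurry_prod, Set.prod_range_range_eq,
    ← Set.range_comp]
  rfl

section Cubic

variable {k : Type*}

noncomputable def cubic (k : Type*) [CommRing k] : MvPolynomial (Fin 5) k :=
  X 0 ^ 2 * X 2 - (X 0 + X 1) ^ 2 * X 3 + X 1 ^ 2 * X 4

noncomputable def annBasis (k : Type*) [CommRing k] : Fin 10 → MvPolynomial (Fin 5) k :=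
  ![X 2 * X 2, X 2 * X 3, X 2 * X 4, X 3 * X 3, X 3 * X 4, X 4 * X 4, X 1 * X 2, X 0 * X 4,
    -(X 0 * X 3) + X 1 * X 3, X 0 * X 2 + X 0 * X 3 + X 1 * X 4]

theorem contractMap_cubic_annBasis [CommRing k] (l : Fin 10) :
    contractMap (cubic k) (annBasis k l) = 0 := by
  fin_cases l <;> simp [annBasis, cubic, contractMap_X_mul_X, pderiv_X]

theorem isHomogeneous_annBasis [CommRing k] (l : Fin 10) : (annBasis k l).IsHomogeneous 2 := by
  have hXX (i j : Fin 5) : (X i * X j : MvPolynomial (Fin 5) k).IsHomogeneous 2 :=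
    (isHomogeneous_X k i).mul (isHomogeneous_X k j)
  fin_cases l <;> simp only [annBasis] <;> apply_rules [IsHomogeneous.add, IsHomogeneous.neg]

theorem linearIndependent_annBasis [CommRing k] : LinearIndependent k (annBasis k) := by
  rw [Fintype.linearIndependent_iff]
  intro c hc
  simp only [Fin.sum_univ_succ, Fin.sum_univ_zero, annBasis, Matrix.cons_val_zero,
    Matrix.cons_val_succ, Fin.reduceSucc, add_zero] at hc
  -- evaluating at `e i + e j` isolates the coefficient of the monomial `X i * X j`
  have h0 : c 0 = 0 := by simpa using congrArg (eval ![0, 0, 1, 0, 0]) hc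
  have h3 : c 3 = 0 := by simpa using congrArg (eval ![0, 0, 0, 1, 0]) hc
  have h5 : c 5 = 0 := by simpa using congrArg (eval ![0, 0, 0, 0, 1]) hc
  have h1 : c 1 = 0 := by simpa [h0, h3] using congrArg (eval ![0, 0, 1, 1, 0]) hc
  have h2 : c 2 = 0 := by simpa [h0, h5] using congrArg (eval ![0, 0, 1, 0, 1]) hc
  have h4 : c 4 = 0 := by simpa [h3, h5] using congrArg (eval ![0, 0, 0, 1, 1]) hc
  have h6 : c 6 = 0 := by simpa [h0] using congrArg (eval ![0, 1, 1, 0, 0]) hc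
  have h7 : c 7 = 0 := by simpa [h5] using congrArg (eval ![1, 0, 0, 0, 1]) hc
  have h8 : c 8 = 0 := by simpa [h3] using congrArg (eval ![0, 1, 0, 1, 0]) hc
  have h9 : c 9 = 0 := by simpa [h0] using congrArg (eval ![1, 0, 1, 0, 0]) hc
  intro l
  fin_cases l <;> assumption

theorem contractMap_cubic_sum_X_mul_X [CommRing k] (c : Fin 5 × Fin 5 → k) :
    contractMap (cubic k) (∑ ij, c ij • (X ij.1 * X ij.2)) =
      ∑ i, ![2 * (c (0, 2) + c (2, 0) - c (0, 3) - c (3, 0) - c (1, 3) - c (3, 1)),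
        2 * (c (1, 4) + c (4, 1) - c (0, 3) - c (3, 0) - c (1, 3) - c (3, 1)),
        2 * c (0, 0), -2 * (c (0, 0) + c (0, 1) + c (1, 0) + c (1, 1)), 2 * c (1, 1)] i • X i := by
  simp [Fintype.sum_prod_type, Fin.sum_univ_five, contractMap_X_mul_X, cubic, pderiv_X,
    two_mul, mul_add]
  module

theorem mem_span_annBasis [CommRing k] [NoZeroDivisors k] [CharZero k]
    {θ : MvPolynomial (Fin 5) k} (hθ : θ.IsHomogeneous 2) (hker : contractMap (cubic k) θ = 0) :
    θ ∈ Submodule.span k (Set.range (annBasis k)) := by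
  obtain ⟨c, rfl⟩ := (Submodule.mem_span_range_iff_exists_fun k).mp
    ((homogeneousSubmodule_two_eq_span_X_mul_X (Fin 5) k).le hθ)
  rw [contractMap_cubic_sum_X_mul_X] at hker
  have hcoeff := Fintype.linearIndependent_iff.mp (linearIndependent_X (Fin 5) k) _ hker
  have h00 : c (0, 0) = 0 := by simpa using hcoeff 2
  have h11 : c (1, 1) = 0 := by simpa using hcoeff 4
  have h01 : c (0, 1) + c (1, 0) = 0 := by simpa [h00, h11] using hcoeff 3
  have h02 : c (0, 2) + c (2, 0) - c (0, 3) - c (3, 0) - c (1, 3) - c (3, 1) = 0 := by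
    simpa using hcoeff 0
  have h14 : c (1, 4) + c (4, 1) - c (0, 3) - c (3, 0) - c (1, 3) - c (3, 1) = 0 := by
    simpa using hcoeff 1
  rw [Submodule.mem_span_range_iff_exists_fun]
  refine ⟨![c (2, 2), c (2, 3) + c (3, 2), c (2, 4) + c (4, 2), c (3, 3), c (3, 4) + c (4, 3),
    c (4, 4), c (1, 2) + c (2, 1), c (0, 4) + c (4, 0), c (1, 3) + c (3, 1),
    c (0, 3) + c (3, 0) + c (1, 3) + c (3, 1)], ?_⟩
  simp only [Fin.sum_univ_succ, Fin.sum_univ_zero, annBasis, Fintype.sum_prod_type,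
    Matrix.cons_val_zero, Matrix.cons_val_succ, Fin.reduceSucc, mul_comm (X (_ : Fin 5)) (X _)]
  -- what remains is supported on `X₀², X₀X₁, X₁², X₀X₂, X₁X₄`, with the coefficients killed above
  linear_combination (norm := module) -h00 • (X 0 * X 0) - h01 • (X 0 * X 1) - h11 • (X 1 * X 1) -
    h02 • (X 0 * X 2) - h14 • (X 1 * X 4)

theorem ker_contractMap_cubic_inf_homogeneousSubmodule_two [CommRing k] [NoZeroDivisors k]
    [CharZero k] :
    LinearMap.ker (contractMap (cubic k)) ⊓ homogeneousSubmodule (Fin 5) k 2 =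
      Submodule.span k (Set.range (annBasis k)) := by
  refine le_antisymm (fun θ hθ => mem_span_annBasis hθ.2 hθ.1) ?_
  rw [Submodule.span_le, Set.range_subset_iff]
  exact fun l => ⟨contractMap_cubic_annBasis l, isHomogeneous_annBasis l⟩

end Cubic

theorem stmt2_general (k : Type*) [Field k] [CharZero k] :
    let x0 : MvPolynomial (Fin 5) k := X 0
    let x1 : MvPolynomial (Fin 5) k := X 1
    let y0 : MvPolynomial (Fin 5) k := X 2
    let y1 : MvPolynomial (Fin 5) k := X 3
    let y2 : MvPolynomial (Fin 5) k := X 4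
    let f := x0 ^ 2 * y0 - (x0 + x1) ^ 2 * y1 + x1 ^ 2 * y2
    let a0 : MvPolynomial (Fin 5) k := X 0
    let a1 : MvPolynomial (Fin 5) k := X 1
    let b0 : MvPolynomial (Fin 5) k := X 2
    let b1 : MvPolynomial (Fin 5) k := X 3
    let b2 : MvPolynomial (Fin 5) k := X 4
    let Ann2 : Submodule k (MvPolynomial (Fin 5) k) :=
      LinearMap.ker (contractMap f) ⊓ homogeneousSubmodule (Fin 5) k 2
    Ann2 = Submodule.span k
        {b0 * b0, b0 * b1, b0 * b2, b1 * b1, b1 * b2, b2 * b2,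
         a1 * b0, a0 * b2, -(a0 * b1) + a1 * b1, a0 * b0 + a0 * b1 + a1 * b2} ∧
      Module.finrank k Ann2 = 10 := by
  intro x0 x1 y0 y1 y2 f a0 a1 b0 b1 b2 Ann2
  have hAnn : Ann2 = Submodule.span k (Set.range (annBasis k)) :=
    ker_contractMap_cubic_inf_homogeneousSubmodule_two
  refine ⟨?_, ?_⟩
  · rw [hAnn]
    simp only [annBasis, Matrix.range_cons, Matrix.range_empty, Set.singleton_union,
      Set.union_empty]
    rfl
  · rw [hAnn, finrank_span_eq_card linearIndependent_annBasis, Fintype.card_fin]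

/-- the degree 2 part of the apolar ideal of
`f = x₀²y₀ − (x₀+x₁)²y₁ + x₁²y₂` is spanned by the products `βᵢβⱼ` together with
`φ₁ = α₁β₀`, `φ₂ = α₀β₂`, `φ₃ = −α₀β₁ + α₁β₁`, `φ₄ = α₀β₀ + α₀β₁ + α₁β₂`;
in particular it has dimension `10`. Here, in the dual ring `k[α₀,α₁,β₀,β₁,β₂]`,
`α₀ = X 0`, `α₁ = X 1`, `β₀ = X 2`, `β₁ = X 3`, `β₂ = X 4`. -/
theorem stmt2 (k : Type*) [Field k] [IsAlgClosed k] [CharZero k] :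
    let x0 : MvPolynomial (Fin 5) k := X 0
    let x1 : MvPolynomial (Fin 5) k := X 1
    let y0 : MvPolynomial (Fin 5) k := X 2
    let y1 : MvPolynomial (Fin 5) k := X 3
    let y2 : MvPolynomial (Fin 5) k := X 4
    let f := x0 ^ 2 * y0 - (x0 + x1) ^ 2 * y1 + x1 ^ 2 * y2
    let a0 : MvPolynomial (Fin 5) k := X 0
    let a1 : MvPolynomial (Fin 5) k := X 1
    let b0 : MvPolynomial (Fin 5) k := X 2
    let b1 : MvPolynomial (Fin 5) k := X 3
    let b2 : MvPolynomial (Fin 5) k := X 4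
    let Ann2 : Submodule k (MvPolynomial (Fin 5) k) :=
      LinearMap.ker (contractMap f) ⊓ homogeneousSubmodule (Fin 5) k 2
    Ann2 = Submodule.span k
        {b0 * b0, b0 * b1, b0 * b2, b1 * b1, b1 * b2, b2 * b2,
         a1 * b0, a0 * b2, -(a0 * b1) + a1 * b1, a0 * b0 + a0 * b1 + a1 * b2} ∧
      Module.finrank k Ann2 = 10 :=
  stmt2_general k
end
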